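/- Let λ = (λ₁ ≥ λ₂ ≥ ⋯ ≥ λ_r ≥ 0) be a partition with r parts (zeros allowed). Then in ℋ(A₁), the left-to-right product ψ_{λ_r} * ψ_{λ_{r−1}+1} * ψ_{λ_{r−2}+2} * ⋯ * ψ_{λ₁+r−1} equals the Schur polynomial s_λ(x₁,…,x_r) ∈ ℋ_r(A₁), where s_λ is characterized by s_λ(x₁,…,x_r) · ∏_{1≤i<j≤r} (x_i − x_j) = det( x_i^{λ_j + r − j} )_{1≤i,j≤r}. -/

import Mathlib

open MvPolynomial
open scoped Classical

/-- A finite quiver with vertex set `Fin n`: a finite type of arrows together with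
head and tail maps. -/
structure FinQuiver (n : ℕ) where
  Arr : Type
  [fintypeArr : Fintype Arr]
  hd : Arr → Fin n
  tl : Arr → Fin n

attribute [instance] FinQuiver.fintypeArr

variable {n : ℕ}

/-- `Q` is acyclic: there is no oriented cycle, i.e. no path
`a₁, …, a_{k+1}` (with `hd aₘ = tl aₘ₊₁`) whose final head equals its initial tail. -/
def FinQuiver.Acyclic (Q : FinQuiver n) : Prop :=
  ∀ (k : ℕ) (c : Fin (k + 1) → Q.Arr),
    (∀ m : Fin k, Q.hd (c m.castSucc) = Q.tl (c m.succ)) →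
    Q.hd (c (Fin.last k)) ≠ Q.tl (c 0)

/-- The Euler form `χ_Q` of the quiver `Q`. -/
def FinQuiver.euler (Q : FinQuiver n) (α β : Fin n → ℕ) : ℤ :=
  ∑ i : Fin n, (α i : ℤ) * β i - ∑ a : Q.Arr, (α (Q.tl a) : ℤ) * β (Q.hd a)

/-- The opposite antisymmetrization `⟨α,β⟩ = χ_Q(β,α) − χ_Q(α,β)`. -/
def FinQuiver.lam (Q : FinQuiver n) (α β : Fin n → ℕ) : ℤ :=
  Q.euler β α - Q.euler α β

/-- The polynomial ring in the variables `ω_{i,j}`, `i ∈ Q₀`, `j ∈ ℕ` (0-indexed). -/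
abbrev PolyQ (n : ℕ) := MvPolynomial (Fin n × ℕ) ℚ

/-- The permutation of the variables at vertex `i` induced by a permutation of `ℕ`. -/
def vertexPerm (i : Fin n) (σ : Equiv.Perm ℕ) : Fin n × ℕ → Fin n × ℕ :=
  fun p => if p.1 = i then (i, σ p.2) else p

/-- `f` is, for each vertex `i`, symmetric in the variables `ω_{i,0},…,ω_{i,γ i − 1}`. -/
def SymmIn (γ : Fin n → ℕ) (f : PolyQ n) : Prop :=
  ∀ (i : Fin n) (σ : Equiv.Perm ℕ),
    (∀ j : ℕ, σ j ≠ j → j < γ i) → rename (vertexPerm i σ) f = f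

lemma vars_smul_subset (c : ℚ) (f : PolyQ n) : (c • f).vars ⊆ f.vars := by
  rw [MvPolynomial.smul_eq_C_mul]
  refine (MvPolynomial.vars_mul _ _).trans ?_
  simp [MvPolynomial.vars_C]

/-- `ℋ_γ`: polynomials using only the variables `ω_{i,j}`, `j < γ i`, which are
symmetric at each vertex.  A `ℚ`-submodule of `PolyQ n`. -/
noncomputable def Hspace (γ : Fin n → ℕ) : Submodule ℚ (PolyQ n) where
  carrier := {f | (∀ p ∈ f.vars, p.2 < γ p.1) ∧ SymmIn γ f}
  add_mem' := by
    rintro f g ⟨hf1, hf2⟩ ⟨hg1, hg2⟩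
    refine ⟨fun p hp => ?_, fun i σ hσ => ?_⟩
    · rcases Finset.mem_union.mp (MvPolynomial.vars_add_subset f g hp) with h | h
      exacts [hf1 p h, hg1 p h]
    · rw [map_add, hf2 i σ hσ, hg2 i σ hσ]
  zero_mem' := by
    refine ⟨fun p hp => ?_, fun i σ hσ => map_zero _⟩
    simp [MvPolynomial.vars_0] at hp
  smul_mem' := by
    rintro c f ⟨hf1, hf2⟩
    refine ⟨fun p hp => hf1 p (vars_smul_subset c f hp), fun i σ hσ => ?_⟩
    rw [map_smul, hf2 i σ hσ]

/-- Polynomials all of whose variables sit at vertex `i`. -/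
noncomputable def onlyVertex (i : Fin n) : Submodule ℚ (PolyQ n) where
  carrier := {f | ∀ p ∈ f.vars, p.1 = i}
  add_mem' := by
    intro f g hf hg p hp
    rcases Finset.mem_union.mp (MvPolynomial.vars_add_subset f g hp) with h | h
    exacts [hf p h, hg p h]
  zero_mem' := by
    intro p hp
    simp [MvPolynomial.vars_0] at hp
  smul_mem' := by
    intro c f hf p hp
    exact hf p (vars_smul_subset c f hp)

/-- `𝒜_{β,m}`: the subspace of `ℋ_{m·β}` of polynomials depending only on the
variables `ω_{i,0},…,ω_{i,m−1}` at the distinguished vertex `i`. -/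
noncomputable def Aspace (β : Fin n → ℕ) (i : Fin n) (m : ℕ) : Submodule ℚ (PolyQ n) :=
  Hspace (fun v => m * β v) ⊓ onlyVertex i

/-- Substitute for the `j`-th variable at vertex `i` the variable `ω_{i,s}` where `s`
is the `j`-th element of `T i` in increasing order. -/
noncomputable def substAlong (T : Fin n → Finset ℕ) : PolyQ n →ₐ[ℚ] PolyQ n :=
  aeval fun p : Fin n × ℕ => X (p.1, ((T p.1).sort (· ≤ ·)).getD p.2 0)

/-- The index set of the Kontsevich–Soibelman localization sum:
for each vertex, a `γ₁ i`-element subset of `{0,…,γ₁ i + γ₂ i − 1}`. -/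
def shuffles (γ₁ γ₂ : Fin n → ℕ) : Finset (Fin n → Finset ℕ) :=
  Fintype.piFinset fun i => (Finset.range (γ₁ i + γ₂ i)).powerset.filter fun s => s.card = γ₁ i

def shuffleCompl (γ₁ γ₂ : Fin n → ℕ) (S : Fin n → Finset ℕ) : Fin n → Finset ℕ :=
  fun i => Finset.range (γ₁ i + γ₂ i) \ S i

/-- The numerator factor attached to the arrow `a`:
`∏_{j' ∈ S̄_{h a}} ∏_{j ∈ S_{t a}} (ω_{h a, j'} − ω_{t a, j})`. -/
noncomputable def arrowFactor (Q : FinQuiver n) (γ₁ γ₂ : Fin n → ℕ)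
    (S : Fin n → Finset ℕ) (a : Q.Arr) : PolyQ n :=
  ∏ j' ∈ shuffleCompl γ₁ γ₂ S (Q.hd a), ∏ j ∈ S (Q.tl a),
    (X (Q.hd a, j') - X (Q.tl a, j))

noncomputable def interactionNum (Q : FinQuiver n) (γ₁ γ₂ : Fin n → ℕ)
    (S : Fin n → Finset ℕ) : PolyQ n :=
  ∏ a : Q.Arr, arrowFactor Q γ₁ γ₂ S a

noncomputable def interactionDen (γ₁ γ₂ : Fin n → ℕ) (S : Fin n → Finset ℕ) : PolyQ n :=
  ∏ i : Fin n, ∏ j' ∈ shuffleCompl γ₁ γ₂ S i, ∏ j ∈ S i, (X (i, j') - X (i, j))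

/-- The Kontsevich–Soibelman localization sum, an element of the field of rational
functions (the fraction field of `PolyQ n`). -/
noncomputable def cohaMulRat (Q : FinQuiver n) (γ₁ γ₂ : Fin n → ℕ) (f₁ f₂ : PolyQ n) :
    FractionRing (PolyQ n) :=
  ∑ S ∈ shuffles γ₁ γ₂,
    algebraMap (PolyQ n) (FractionRing (PolyQ n))
        (substAlong S f₁ * substAlong (shuffleCompl γ₁ γ₂ S) f₂ * interactionNum Q γ₁ γ₂ S) /
      algebraMap (PolyQ n) (FractionRing (PolyQ n)) (interactionDen γ₁ γ₂ S)

/-- The CoHA product `f₁ * f₂`: the unique polynomial representing the localization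
sum (and `0` if the sum were not a polynomial, which never happens). -/
noncomputable def cohaMul (Q : FinQuiver n) (γ₁ γ₂ : Fin n → ℕ) (f₁ f₂ : PolyQ n) : PolyQ n :=
  if h : ∃ P : PolyQ n,
      algebraMap (PolyQ n) (FractionRing (PolyQ n)) P = cohaMulRat Q γ₁ γ₂ f₁ f₂ then
    h.choose
  else 0

/-- Iterated, left-to-right, CoHA product of a list of dimension-vector/polynomial pairs.
Returns the total dimension vector together with the product. -/
noncomputable def cohaProd (Q : FinQuiver n) :
    List ((Fin n → ℕ) × PolyQ n) → (Fin n → ℕ) × PolyQ n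
  | [] => (fun _ => 0, 1)
  | x :: xs => xs.foldl (fun acc y => (acc.1 + y.1, cohaMul Q acc.1 y.1 acc.2 y.2)) x

/-- Left-to-right CoHA product `f 0 * f 1 * ⋯ * f (r−1)` with `f u ∈ ℋ_{γ u}`. -/
noncomputable def cohaProdFin (Q : FinQuiver n) {r : ℕ} (γ : Fin r → Fin n → ℕ)
    (f : Fin r → PolyQ n) : PolyQ n :=
  (cohaProd Q (List.ofFn fun u => (γ u, f u))).2

/-- The quiver with one vertex and no arrows. -/
def A1 : FinQuiver 1 := { Arr := Empty, hd := Empty.elim, tl := Empty.elim }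

/-- `ψ_p = x₁ ^ p ∈ ℋ₁(A₁)`. -/
noncomputable def psi (p : ℕ) : PolyQ 1 := X ((0 : Fin 1), 0) ^ p

def oneDim : Fin 1 → ℕ := fun _ => 1

/-- The simple dimension vector `e_i`. -/
def simpleDim (i : Fin n) : Fin n → ℕ := fun v => if v = i then 1 else 0

/-- A subquiver of `Q`. -/
structure Subquiver (Q : FinQuiver n) where
  verts : Finset (Fin n)
  arrows : Finset Q.Arr
  hd_mem : ∀ a ∈ arrows, Q.hd a ∈ verts
  tl_mem : ∀ a ∈ arrows, Q.tl a ∈ verts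

def Subquiver.Full {Q : FinQuiver n} (Q' : Subquiver Q) : Prop :=
  ∀ a : Q.Arr, Q.hd a ∈ Q'.verts → Q.tl a ∈ Q'.verts → a ∈ Q'.arrows

/-- Adjacency in the underlying undirected graph of a subquiver. -/
def Subquiver.Adj {Q : FinQuiver n} (Q' : Subquiver Q) (x y : Fin n) : Prop :=
  ∃ a ∈ Q'.arrows, (Q.hd a = x ∧ Q.tl a = y) ∨ (Q.hd a = y ∧ Q.tl a = x)

def Subquiver.Connected {Q : FinQuiver n} (Q' : Subquiver Q) : Prop :=
  ∀ x ∈ Q'.verts, ∀ y ∈ Q'.verts, Relation.ReflTransGen Q'.Adj x y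

/-- The Euler form of the subquiver `Q'` (on `ℤ`-valued vectors). -/
def Subquiver.eulerZ {Q : FinQuiver n} (Q' : Subquiver Q) (α β : Fin n → ℤ) : ℤ :=
  ∑ i ∈ Q'.verts, α i * β i - ∑ a ∈ Q'.arrows, α (Q.tl a) * β (Q.hd a)

/-- Positive definiteness of the Tits form of `Q'` on vectors supported on `Q'`. -/
def Subquiver.PosDefTits {Q : FinQuiver n} (Q' : Subquiver Q) : Prop :=
  ∀ β : Fin n → ℤ, (∀ i, i ∉ Q'.verts → β i = 0) → β ≠ 0 → 0 < Q'.eulerZ β β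

/-- A connected full subquiver with positive definite Tits form. -/
def Subquiver.IsDynkin {Q : FinQuiver n} (Q' : Subquiver Q) : Prop :=
  Q'.Connected ∧ Q'.Full ∧ Q'.PosDefTits

/-- A positive root of `Q'`: a nonzero dimension vector supported on `Q'` with
Tits form equal to `1`. -/
def Subquiver.IsPosRoot {Q : FinQuiver n} (Q' : Subquiver Q) (β : Fin n → ℕ) : Prop :=
  (∀ i, i ∉ Q'.verts → β i = 0) ∧ β ≠ 0 ∧
    Q'.eulerZ (fun i => (β i : ℤ)) (fun i => (β i : ℤ)) = 1

/-- A subquiver regarded as a quiver in its own right (on the ambient vertex set). -/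
def Subquiver.toQuiver {Q : FinQuiver n} (Q' : Subquiver Q) : FinQuiver n :=
  { Arr := {a : Q.Arr // a ∈ Q'.arrows}, hd := fun a => Q.hd a.1, tl := fun a => Q.tl a.1 }

/-- An (ordered list) subquiver partition `𝒬• = (Q¹,…,Q^ℓ)`: nonempty connected
subquivers whose vertex sets partition `Q₀`. -/
structure SubqPartition (Q : FinQuiver n) (ℓ : ℕ) where
  part : Fin ℓ → Subquiver Q
  nonempty' : ∀ j, (part j).verts.Nonempty
  connected' : ∀ j, (part j).Connected
  cover : ∀ i : Fin n, ∃! j, i ∈ (part j).verts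

/-- The set `𝒬•₁` of arrows belonging to one of the parts. -/
noncomputable def SubqPartition.arrs {Q : FinQuiver n} {ℓ : ℕ} (P : SubqPartition Q ℓ) : Finset Q.Arr :=
  Finset.univ.biUnion fun j => (P.part j).arrows

/-- The partition is admissible and ordered: every arrow not inside a part goes from a
later part to an earlier part (head before tail). -/
def SubqPartition.Ordered {Q : FinQuiver n} {ℓ : ℕ} (P : SubqPartition Q ℓ) : Prop :=
  ∀ a : Q.Arr, a ∉ P.arrs → ∀ i j : Fin ℓ,
    Q.hd a ∈ (P.part i).verts → Q.tl a ∈ (P.part j).verts → i < j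

/-- Every part is a Dynkin subquiver. -/
def SubqPartition.Dynkin {Q : FinQuiver n} {ℓ : ℕ} (P : SubqPartition Q ℓ) : Prop :=
  ∀ j, (P.part j).IsDynkin

/-- `β : Fin r → (Fin n → ℕ)` is a Reineke-ordered enumeration of `Φ₊(𝒬•)`, with
`blk u` the part to which `β u` belongs: block-monotone, enumerating all positive roots
without repetition, and within each block `u < v → ⟨β u, β v⟩ ≥ 0`. -/
def IsReinekeOrder {Q : FinQuiver n} {ℓ : ℕ} (P : SubqPartition Q ℓ) {r : ℕ}
    (β : Fin r → Fin n → ℕ) (blk : Fin r → Fin ℓ) : Prop :=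
  Monotone blk ∧
  (∀ u, (P.part (blk u)).IsPosRoot (β u)) ∧
  Function.Injective β ∧
  (∀ j (b : Fin n → ℕ), (P.part j).IsPosRoot b → ∃ u, β u = b) ∧
  (∀ u v : Fin r, u < v → blk u = blk v → 0 ≤ Q.lam (β u) (β v))


/-!
In `ℋ(A₁)`, multiplying `F ∈ ℋ_k` by `ψ_a` gives `∑_t F(x_{≠t}) x_t^a / ∏_{j≠t} (x_t - x_j)`.
Suppose `F · Δ_k = det (x_i ^ e_j)`, where `Δ_k = ∏_{i<j} (x_i - x_j)`. Pulling the variable `x_t`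
out of `Δ_{k+1}` costs the sign `(-1)^t`, and the sum becomes the expansion along the first
column of `det (x_i ^ (a, e)_j)`, divided by `Δ_{k+1}`. The quotient is a polynomial because
`Δ` divides every alternant: the rows `i` and `j` agree modulo `x_i - x_j`, and these factors are
pairwise non-associated primes. By induction, `ψ_{p_0} * ⋯ * ψ_{p_{k-1}} · Δ_k` is the alternant
with exponents `p_{k-1}, …, p_0`; the Schur identity is the case `p_u = λ_{r-u} + u`.
-/

open Finset Matrix

section Alternant

variable {R : Type*} [CommRing R] {k : ℕ}

def vandermondeProd (v : Fin k → R) : R := ∏ i, ∏ j ∈ Ioi i, (v i - v j)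

def alternant (v : Fin k → R) (e : Fin k → ℕ) : R := (Matrix.of fun i j => v i ^ e j).det

lemma vandermondeProd_eq_det_vandermonde_neg (v : Fin k → R) :
    vandermondeProd v = (vandermonde (-v)).det := by
  simp only [vandermondeProd, det_vandermonde, Pi.neg_apply, neg_sub_neg]

lemma vandermondeProd_eq_prod_filter_lt (v : Fin k → R) :
    vandermondeProd v =
      ∏ p ∈ univ.filter (fun p : Fin k × Fin k => p.1 < p.2), (v p.1 - v p.2) := by
  rw [prod_filter, Fintype.prod_prod_type, vandermondeProd]
  refine prod_congr rfl fun i _ => ?_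
  rw [← prod_filter, filter_lt_eq_Ioi]

lemma vandermondeProd_comp_perm (v : Fin k → R) (σ : Equiv.Perm (Fin k)) :
    vandermondeProd (v ∘ σ) = Equiv.Perm.sign σ * vandermondeProd v := by
  rw [vandermondeProd_eq_det_vandermonde_neg, vandermondeProd_eq_det_vandermonde_neg,
    ← det_permute]
  rfl

lemma vandermondeProd_cons (a : R) (v : Fin k → R) :
    vandermondeProd (Fin.cons a v : Fin (k + 1) → R) = (∏ j, (a - v j)) * vandermondeProd v := by
  simp only [vandermondeProd, Fin.prod_univ_succ, Fin.prod_Ioi_zero, Fin.prod_Ioi_succ,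
    Fin.cons_zero, Fin.cons_succ]

lemma vandermondeProd_eq_succAbove (v : Fin (k + 1) → R) (t : Fin (k + 1)) :
    vandermondeProd v =
      (-1) ^ (t : ℕ) * (∏ j, (v t - v (t.succAbove j))) * vandermondeProd (v ∘ t.succAbove) := by
  have hv : v ∘ t.cycleRange.symm = Fin.cons (v t) (v ∘ t.succAbove) := by
    ext j
    cases j using Fin.cases <;> simp [Fin.cycleRange_symm_zero, Fin.cycleRange_symm_succ]
  have h := vandermondeProd_comp_perm v t.cycleRange.symm
  rw [hv, vandermondeProd_cons, Equiv.Perm.sign_symm, Fin.sign_cycleRange] at h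
  have hsq : ((-1) ^ (t : ℕ) * (-1) ^ (t : ℕ) : R) = 1 := by
    rw [← mul_pow, neg_one_mul, neg_neg, one_pow]
  push_cast at h
  simp only [Function.comp_apply] at h
  linear_combination (-(-1) ^ (t : ℕ)) * h - vandermondeProd v * hsq

lemma map_vandermondeProd {S F : Type*} [CommRing S] [FunLike F R S] [RingHomClass F R S]
    (φ : F) (v : Fin k → R) : φ (vandermondeProd v) = vandermondeProd (φ ∘ v) := by
  simp only [vandermondeProd, map_prod, map_sub, Function.comp_apply]

lemma map_alternant {S F : Type*} [CommRing S] [FunLike F R S] [RingHomClass F R S] (φ : F)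
    (v : Fin k → R) (e : Fin k → ℕ) : φ (alternant v e) = alternant (φ ∘ v) e := by
  rw [alternant, ← RingHom.coe_coe φ, RingHom.map_det]
  congr 1
  ext i j
  simp

lemma alternant_cons (v : Fin (k + 1) → R) (a : ℕ) (e : Fin k → ℕ) :
    alternant v (Fin.cons a e) =
      ∑ t : Fin (k + 1), (-1) ^ (t : ℕ) * v t ^ a * alternant (v ∘ t.succAbove) e := by
  rw [alternant, det_succ_column_zero]
  rfl

lemma Matrix.dvd_det_of_dvd_sub_row {n : Type*} [Fintype n] [DecidableEq n] {M : Matrix n n R}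
    {i i' : n} (hii' : i ≠ i') {c : R} (h : ∀ j, c ∣ M i j - M i' j) : c ∣ M.det := by
  rw [← Ideal.Quotient.eq_zero_iff_dvd, RingHom.map_det]
  refine det_zero_of_row_eq hii' (funext fun j => ?_)
  exact Ideal.Quotient.eq.mpr (Ideal.mem_span_singleton.mpr (h j))

lemma sub_dvd_alternant (v : Fin k → R) (e : Fin k → ℕ) {i i' : Fin k} (hii' : i ≠ i') :
    v i - v i' ∣ alternant v e :=
  dvd_det_of_dvd_sub_row hii' fun j => sub_dvd_pow_sub_pow (v i) (v i') (e j)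

lemma vandermondeProd_dvd_alternant [DecompositionMonoid R] (v : Fin k → R) (e : Fin k → ℕ)
    (hv : (univ.filter fun p : Fin k × Fin k => p.1 < p.2 : Set (Fin k × Fin k)).Pairwise
      (Function.onFun IsRelPrime fun p : Fin k × Fin k => v p.1 - v p.2)) :
    vandermondeProd v ∣ alternant v e := by
  rw [vandermondeProd_eq_prod_filter_lt]
  refine prod_dvd_of_isRelPrime hv fun p hp => sub_dvd_alternant v e ?_
  exact (mem_filter.mp hp).2.ne

end Alternant

namespace MvPolynomial

variable {σ R : Type*} [CommRing R]

lemma prime_X_sub_X [IsDomain R] {u v : σ} (huv : u ≠ v) :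
    Prime (X u - X v : MvPolynomial σ R) := by
  classical
  let e : MvPolynomial σ R ≃ₐ[R] MvPolynomial σ R :=
    AlgEquiv.ofAlgHom (aeval (Function.update X u (X u - X v)))
      (aeval (Function.update X u (X u + X v)))
      (algHom_ext fun i => by by_cases hi : i = u <;> simp [hi, huv.symm])
      (algHom_ext fun i => by by_cases hi : i = u <;> simp [hi, huv.symm])
  have he : e (X u) = X u - X v := by simp [e]
  rw [← he, MulEquiv.prime_iff]
  exact X_prime

lemma eq_or_eq_of_X_sub_X_dvd [Nontrivial R] {a b c d : σ} (hcd : c ≠ d)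
    (h : X a - X b ∣ (X c - X d : MvPolynomial σ R)) : c = a ∨ c = b := by
  classical
  by_contra! hc
  have := map_dvd (eval fun y => if y = c then (1 : R) else 0) h
  simp [hc.1.symm, hc.2.symm, hcd.symm] at this

lemma vandermondeProd_X_dvd_alternant [IsDomain R] [UniqueFactorizationMonoid R] {k : ℕ}
    {ι : Fin k → σ} (hι : Function.Injective ι) (e : Fin k → ℕ) :
    vandermondeProd (fun i => (X (ι i) : MvPolynomial σ R)) ∣ alternant (fun i => X (ι i)) e := by
  refine vandermondeProd_dvd_alternant _ e fun p hp q hq hpq => ?_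
  simp only [coe_filter, mem_univ, true_and, Set.mem_ofPred_eq] at hp hq
  rw [Function.onFun, (prime_X_sub_X (hι.ne hp.ne)).irreducible.isRelPrime_iff_not_dvd]
  intro hdvd
  have hdvd' : X (ι p.1) - X (ι p.2) ∣ (X (ι q.2) - X (ι q.1) : MvPolynomial σ R) := by
    rwa [← dvd_neg, neg_sub]
  have h1 := eq_or_eq_of_X_sub_X_dvd (hι.ne hq.ne) hdvd
  have h2 := eq_or_eq_of_X_sub_X_dvd (hι.ne hq.ne.symm) hdvd'
  simp only [hι.eq_iff] at h1 h2
  apply hpq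
  simp only [Prod.ext_iff, Fin.ext_iff, Fin.lt_def] at *
  omega

end MvPolynomial

lemma cohaMul_eq_of_algebraMap_eq {Q : FinQuiver n} {γ₁ γ₂ : Fin n → ℕ} {f₁ f₂ P : PolyQ n}
    (h : algebraMap (PolyQ n) (FractionRing (PolyQ n)) P = cohaMulRat Q γ₁ γ₂ f₁ f₂) :
    cohaMul Q γ₁ γ₂ f₁ f₂ = P := by
  have hex : ∃ P : PolyQ n,
      algebraMap (PolyQ n) (FractionRing (PolyQ n)) P = cohaMulRat Q γ₁ γ₂ f₁ f₂ := ⟨P, h⟩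
  rw [cohaMul, dif_pos hex]
  exact IsFractionRing.injective _ (FractionRing (PolyQ n)) (hex.choose_spec.trans h.symm)

-- `cohaProd` starts the fold at the first factor rather than at `1`, hence the unit law `hy`.
lemma cohaProd_concat (Q : FinQuiver n) (l : List ((Fin n → ℕ) × PolyQ n))
    (y : (Fin n → ℕ) × PolyQ n) (hy : cohaMul Q (fun _ => 0) y.1 1 y.2 = y.2) :
    cohaProd Q (l.concat y) =
      ((cohaProd Q l).1 + y.1, cohaMul Q (cohaProd Q l).1 y.1 (cohaProd Q l).2 y.2) := by
  cases l with
  | nil => exact Prod.ext (funext fun _ => (zero_add _).symm) hy.symm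
  | cons x xs => simp [cohaProd]

section A1

variable {k : ℕ}

noncomputable abbrev xvars (k : ℕ) : Fin k → PolyQ 1 := fun i => X (0, i)

lemma xvars_injective (k : ℕ) : Function.Injective (xvars k) := fun i j h => by
  simpa [Fin.val_inj] using X_injective h

lemma vandermondeProd_xvars_ne_zero (k : ℕ) : vandermondeProd (xvars k) ≠ 0 := by
  rw [vandermondeProd_eq_det_vandermonde_neg, Ne, det_vandermonde_eq_zero_iff]
  rintro ⟨i, j, hij, hne⟩
  exact hne (xvars_injective k (neg_injective hij))

lemma card_range_sdiff_singleton (t : Fin (k + 1)) : (range (k + 1) \ {(t : ℕ)}).card = k := by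
  rw [card_sdiff_of_subset (singleton_subset_iff.mpr (mem_range.mpr t.isLt)), card_range,
    card_singleton, Nat.add_sub_cancel]

lemma orderEmbOfFin_range_sdiff_singleton (t : Fin (k + 1)) :
    ⇑((range (k + 1) \ {(t : ℕ)}).orderEmbOfFin (card_range_sdiff_singleton t)) =
      fun j => (t.succAbove j : ℕ) := by
  refine (orderEmbOfFin_unique _ (fun j => ?_)
    (Fin.val_strictMono.comp t.strictMono_succAbove)).symm
  simp [Fin.val_ne_iff, Fin.succAbove_ne, Nat.le_of_lt_succ (t.succAbove j).isLt]

lemma substAlong_range_sdiff_singleton (t : Fin (k + 1)) :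
    ⇑(substAlong fun _ => range (k + 1) \ {(t : ℕ)}) ∘ xvars k = xvars (k + 1) ∘ t.succAbove := by
  funext j
  have h := congrFun (orderEmbOfFin_range_sdiff_singleton t) j
  rw [orderEmbOfFin_apply, Fin.getElem_fin] at h
  simp only [Function.comp_apply, substAlong, aeval_X]
  rw [List.getD_eq_getElem _ _ (by simp [card_range_sdiff_singleton]), h]

lemma substAlong_singleton_psi (t a : ℕ) :
    substAlong (fun _ => {t}) (psi a) = X (0, t) ^ a := by
  simp [psi, substAlong]

lemma shuffles_oneDim (k : ℕ) :
    shuffles (fun _ => k) oneDim =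
      univ.image fun t : Fin (k + 1) => fun _ => range (k + 1) \ {(t : ℕ)} := by
  ext S
  simp only [shuffles, oneDim, Fintype.mem_piFinset, mem_filter, mem_powerset, Fin.forall_fin_one,
    mem_image, mem_univ, true_and, funext_iff]
  constructor
  · rintro ⟨hsub, hcard⟩
    obtain ⟨t, ht⟩ := card_eq_one.mp (by rw [card_sdiff_of_subset hsub, card_range, hcard]; omega :
      (range (k + 1) \ S 0).card = 1)
    have htk : t < k + 1 := mem_range.mp (mem_sdiff.mp (ht ▸ mem_singleton_self t)).1
    exact ⟨⟨t, htk⟩, by rw [← ht, Finset.sdiff_sdiff_eq_self hsub]⟩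
  · rintro ⟨t, ht⟩
    rw [← ht]
    exact ⟨sdiff_subset, card_range_sdiff_singleton t⟩

lemma interactionNum_A1 (γ₁ γ₂ : Fin 1 → ℕ) (S : Fin 1 → Finset ℕ) :
    interactionNum A1 γ₁ γ₂ S = 1 :=
  Fintype.prod_empty (ι := Empty) _

lemma shuffleCompl_range_sdiff_singleton (t : Fin (k + 1)) :
    shuffleCompl (fun _ => k) oneDim (fun _ => range (k + 1) \ {(t : ℕ)}) = fun _ => {(t : ℕ)} :=
  funext fun _ => Finset.sdiff_sdiff_eq_self (singleton_subset_iff.mpr (mem_range.mpr t.isLt))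

lemma interactionDen_range_sdiff_singleton (t : Fin (k + 1)) :
    interactionDen (fun _ => k) oneDim (fun _ => range (k + 1) \ {(t : ℕ)}) =
      ∏ j, (xvars (k + 1) t - xvars (k + 1) (t.succAbove j)) := by
  rw [interactionDen, shuffleCompl_range_sdiff_singleton, Fin.prod_univ_one, prod_singleton,
    ← map_orderEmbOfFin_univ _ (card_range_sdiff_singleton t), prod_map]
  simp only [RelEmbedding.coe_toEmbedding, orderEmbOfFin_range_sdiff_singleton]

lemma cohaMulRat_oneDim (k : ℕ) (F G : PolyQ 1) :
    cohaMulRat A1 (fun _ => k) oneDim F G =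
      ∑ t : Fin (k + 1),
        algebraMap (PolyQ 1) (FractionRing (PolyQ 1))
            (substAlong (fun _ => range (k + 1) \ {(t : ℕ)}) F *
              substAlong (fun _ => {(t : ℕ)}) G) /
          algebraMap (PolyQ 1) (FractionRing (PolyQ 1))
            (∏ j, (xvars (k + 1) t - xvars (k + 1) (t.succAbove j))) := by
  have hinj : Function.Injective
      fun t : Fin (k + 1) => fun _ : Fin 1 => range (k + 1) \ {(t : ℕ)} := by
    intro t t' h
    have h0 : range (k + 1) \ {(t : ℕ)} = range (k + 1) \ {(t' : ℕ)} := congrFun h 0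
    have ht : (t : ℕ) ∉ range (k + 1) \ {(t' : ℕ)} := by
      rw [← h0]
      simp
    simpa [Fin.val_inj, Nat.le_of_lt_succ t.isLt] using ht
  rw [cohaMulRat, shuffles_oneDim, sum_image hinj.injOn]
  refine sum_congr rfl fun t _ => ?_
  rw [shuffleCompl_range_sdiff_singleton, interactionNum_A1, mul_one,
    interactionDen_range_sdiff_singleton]

lemma cohaMul_psi_mul_vandermondeProd {e : Fin k → ℕ} {F : PolyQ 1}
    (hF : F * vandermondeProd (xvars k) = alternant (xvars k) e) (a : ℕ) :
    cohaMul A1 (fun _ => k) oneDim F (psi a) * vandermondeProd (xvars (k + 1)) =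
      alternant (xvars (k + 1)) (Fin.cons a e) := by
  set toFrac := algebraMap (PolyQ 1) (FractionRing (PolyQ 1))
  have hinj : Function.Injective toFrac := IsFractionRing.injective _ _
  have hV := vandermondeProd_xvars_ne_zero (k + 1)
  obtain ⟨G, hG⟩ := MvPolynomial.vandermondeProd_X_dvd_alternant (R := ℚ)
    (ι := fun i : Fin (k + 1) => ((0 : Fin 1), (i : ℕ)))
    (fun i j h => by simpa [Fin.val_inj] using h) (Fin.cons a e)
  suffices toFrac G = cohaMulRat A1 (fun _ => k) oneDim F (psi a) by
    rw [cohaMul_eq_of_algebraMap_eq this, mul_comm]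
    exact hG.symm
  have hterm : ∀ t : Fin (k + 1),
      toFrac (substAlong (fun _ => range (k + 1) \ {(t : ℕ)}) F *
            substAlong (fun _ => {(t : ℕ)}) (psi a)) /
          toFrac (∏ j, (xvars (k + 1) t - xvars (k + 1) (t.succAbove j))) =
        toFrac ((-1) ^ (t : ℕ) * xvars (k + 1) t ^ a *
            alternant (xvars (k + 1) ∘ t.succAbove) e) /
          toFrac (vandermondeProd (xvars (k + 1))) := by
    intro t
    have hsub := congrArg (substAlong fun _ => range (k + 1) \ {(t : ℕ)}) hF
    rw [map_mul, map_vandermondeProd, map_alternant, substAlong_range_sdiff_singleton] at hsub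
    have hsplit := vandermondeProd_eq_succAbove (xvars (k + 1)) t
    have hD : ∏ j, (xvars (k + 1) t - xvars (k + 1) (t.succAbove j)) ≠ 0 := by
      intro h
      rw [h, mul_zero, zero_mul] at hsplit
      exact hV hsplit
    rw [div_eq_div_iff ((map_ne_zero_iff toFrac hinj).mpr hD)
      ((map_ne_zero_iff toFrac hinj).mpr hV), ← map_mul, ← map_mul, substAlong_singleton_psi]
    congr 1
    linear_combination
      (substAlong (fun _ => range (k + 1) \ {(t : ℕ)}) F * xvars (k + 1) t ^ a) * hsplit +
      ((-1) ^ (t : ℕ) * xvars (k + 1) t ^ a *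
        ∏ j, (xvars (k + 1) t - xvars (k + 1) (t.succAbove j))) * hsub
  rw [cohaMulRat_oneDim, sum_congr rfl fun t _ => hterm t, ← sum_div, ← map_sum,
    ← alternant_cons, hG, map_mul, mul_div_cancel_left₀ _ ((map_ne_zero_iff toFrac hinj).mpr hV)]

lemma cohaMul_one_psi (a : ℕ) : cohaMul A1 (fun _ => 0) oneDim 1 (psi a) = psi a := by
  have h := cohaMul_psi_mul_vandermondeProd (k := 0) (e := Fin.elim0) (F := 1)
    (by simp [vandermondeProd, alternant]) a
  simp [vandermondeProd, alternant] at h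
  exact h

lemma cohaProd_ofFn_psi (p : Fin k → ℕ) :
    (cohaProd A1 (List.ofFn fun u => (oneDim, psi (p u)))).1 = (fun _ => k) ∧
      (cohaProd A1 (List.ofFn fun u => (oneDim, psi (p u)))).2 * vandermondeProd (xvars k) =
        alternant (xvars k) fun j => p j.rev := by
  induction k with
  | zero => simp [cohaProd, vandermondeProd, alternant]
  | succ k ih =>
    obtain ⟨h1, h2⟩ := ih fun u => p u.castSucc
    rw [List.ofFn_succ', cohaProd_concat _ _ (oneDim, psi (p (Fin.last k))) (cohaMul_one_psi _),
      h1]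
    refine ⟨rfl, ?_⟩
    have hexp : (fun j : Fin (k + 1) => p j.rev) =
        Fin.cons (p (Fin.last k)) fun j => p j.rev.castSucc := by
      funext j
      cases j using Fin.cases <;> simp [Fin.rev_succ]
    rw [hexp]
    exact cohaMul_psi_mul_vandermondeProd h2 _

end A1

theorem psi_product_eq_schur_general (r : ℕ) (lam : Fin r → ℕ) :
    ∀ s : PolyQ 1,
      s * (∏ p ∈ Finset.univ.filter (fun p : Fin r × Fin r => p.1 < p.2),
            (X ((0 : Fin 1), (p.1 : ℕ)) - X ((0 : Fin 1), (p.2 : ℕ)))) =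
          (Matrix.of fun i j : Fin r =>
            (X ((0 : Fin 1), (i : ℕ)) : PolyQ 1) ^ (lam j + (r - 1 - (j : ℕ)))).det →
      cohaProdFin A1 (fun _ => oneDim) (fun u => psi (lam u.rev + (u : ℕ))) = s := by
  intro s hs
  have hP := (cohaProd_ofFn_psi fun u : Fin r => lam u.rev + u).2
  have hs' : s * vandermondeProd (xvars r) = alternant (xvars r) fun j => lam j + (r - 1 - j) := by
    rw [vandermondeProd_eq_prod_filter_lt]
    exact hs
  have hexp : (fun j : Fin r => lam j.rev.rev + (j.rev : ℕ)) = fun j => lam j + (r - 1 - j) := by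
    funext j
    rw [Fin.rev_rev, Fin.val_rev]
    omega
  rw [hexp] at hP
  exact mul_right_cancel₀ (vandermondeProd_xvars_ne_zero r) (hP.trans hs'.symm)

/-- For a partition `λ₁ ≥ ⋯ ≥ λ_r ≥ 0` (here `lam : Fin r → ℕ`,
antitone, 0-indexed), the left-to-right product
`ψ_{λ_r} * ψ_{λ_{r−1}+1} * ⋯ * ψ_{λ₁+r−1}` in `ℋ(A₁)` equals the Schur polynomial
`s_λ(x₁,…,x_r)`, characterized by
`s_λ · ∏_{i<j} (x_i − x_j) = det (x_i^{λ_j + r − j})`. -/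
theorem psi_product_eq_schur (r : ℕ) (lam : Fin r → ℕ) (hlam : Antitone lam) :
    ∀ s : PolyQ 1,
      s * (∏ p ∈ Finset.univ.filter (fun p : Fin r × Fin r => p.1 < p.2),
            (X ((0 : Fin 1), (p.1 : ℕ)) - X ((0 : Fin 1), (p.2 : ℕ)))) =
          (Matrix.of fun i j : Fin r =>
            (X ((0 : Fin 1), (i : ℕ)) : PolyQ 1) ^ (lam j + (r - 1 - (j : ℕ)))).det →
      cohaProdFin A1 (fun _ => oneDim) (fun u => psi (lam u.rev + (u : ℕ))) = s :=
  psi_product_eq_schur_general r lam
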